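/- arXiv:2107.14609 — 8 statements merged into one kernel-verified Lean document; each statement's English description precedes it below -/
import Mathlib

section
/- Let β = (β₁, β₂, β₃, β₄) : J → ℝ⁴₂ be a smooth null curve on an interval J such that β₁'(u) + β₃'(u) ≠ 0 for all u ∈ J. Then the smooth functions f = (β₁' + β₃')/2, g = (β₂' + β₄')/(β₁' + β₃'), h = (−β₂' + β₄')/(β₁' + β₃') satisfy: f never vanishes on J and β'(u) = f(u)·(1 + g(u)h(u), g(u) − h(u), 1 − g(u)h(u), g(u) + h(u)) for all u ∈ J. -/
noncomputable section

/-- if `β = (β₁,β₂,β₃,β₄)` is a smooth null curve in `ℝ⁴₂` on an open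
interval `J` with `β₁' + β₃' ≠ 0` on `J`, then the smooth functions
`f = (β₁' + β₃')/2`, `g = (β₂' + β₄')/(β₁' + β₃')`, `h = (−β₂' + β₄')/(β₁' + β₃')`
satisfy: `f` never vanishes on `J` and
`β' = f·(1 + gh, g − h, 1 − gh, g + h)` on `J`. -/
theorem stmt2 (β₁ β₂ β₃ β₄ : ℝ → ℝ) (J : Set ℝ)
    (hJopen : IsOpen J) (hJconn : J.OrdConnected)
    (hβ₁ : ContDiffOn ℝ (⊤ : ℕ∞) β₁ J) (hβ₂ : ContDiffOn ℝ (⊤ : ℕ∞) β₂ J)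
    (hβ₃ : ContDiffOn ℝ (⊤ : ℕ∞) β₃ J) (hβ₄ : ContDiffOn ℝ (⊤ : ℕ∞) β₄ J)
    (hnull : ∀ u ∈ J, (deriv β₁ u) ^ 2 + (deriv β₂ u) ^ 2
      - (deriv β₃ u) ^ 2 - (deriv β₄ u) ^ 2 = 0)
    (hne : ∀ u ∈ J, deriv β₁ u + deriv β₃ u ≠ 0)
    (f g h : ℝ → ℝ)
    (hf : ∀ u ∈ J, f u = (deriv β₁ u + deriv β₃ u) / 2)
    (hg : ∀ u ∈ J, g u = (deriv β₂ u + deriv β₄ u) / (deriv β₁ u + deriv β₃ u))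
    (hh : ∀ u ∈ J, h u = (-deriv β₂ u + deriv β₄ u) / (deriv β₁ u + deriv β₃ u)) :
    ContDiffOn ℝ (⊤ : ℕ∞) f J ∧ ContDiffOn ℝ (⊤ : ℕ∞) g J ∧ ContDiffOn ℝ (⊤ : ℕ∞) h J ∧
    (∀ u ∈ J, f u ≠ 0) ∧
    (∀ u ∈ J,
      deriv β₁ u = f u * (1 + g u * h u) ∧
      deriv β₂ u = f u * (g u - h u) ∧
      deriv β₃ u = f u * (1 - g u * h u) ∧
      deriv β₄ u = f u * (g u + h u)) := by
  have hd₁ : ContDiffOn ℝ (⊤ : ℕ∞) (deriv β₁) J := hβ₁.deriv_of_isOpen hJopen (by simp)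
  have hd₂ : ContDiffOn ℝ (⊤ : ℕ∞) (deriv β₂) J := hβ₂.deriv_of_isOpen hJopen (by simp)
  have hd₃ : ContDiffOn ℝ (⊤ : ℕ∞) (deriv β₃) J := hβ₃.deriv_of_isOpen hJopen (by simp)
  have hd₄ : ContDiffOn ℝ (⊤ : ℕ∞) (deriv β₄) J := hβ₄.deriv_of_isOpen hJopen (by simp)
  have hs : ContDiffOn ℝ (⊤ : ℕ∞) (fun u => deriv β₁ u + deriv β₃ u) J := hd₁.add hd₃
  refine ⟨?_, ?_, ?_, ?_, ?_⟩
  · exact ContDiffOn.congr ((hs.div_const 2)) hf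
  · exact ContDiffOn.congr ((hd₂.add hd₄).div hs hne) hg
  · exact ContDiffOn.congr ((hd₂.neg.add hd₄).div hs hne) hh
  · intro u hu
    rw [hf u hu]
    exact div_ne_zero (hne u hu) two_ne_zero
  · intro u hu
    have hs0 := hne u hu
    have hn := hnull u hu
    rw [hf u hu, hg u hu, hh u hu]
    refine ⟨?_, ?_, ?_, ?_⟩ <;> field_simp <;>
      first
        | linear_combination (deriv β₁ u + deriv β₃ u) * hn
        | linear_combination (-(deriv β₁ u + deriv β₃ u)) * hn
        | linear_combination hn
        | linear_combination (-1 : ℝ) * hn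
        | ring
end
end

section
/- Let β = (β₁, β₂, β₃, β₄) : J → ℝ⁴₂ be a C¹ null curve on a connected open interval J such that (β₁')² = (β₃')² = (β₄')² on J and β₁' never vanishes on J. Then there exist a nonvanishing continuous function f on J and constants ε₁, ε₂, ε₃ ∈ {−1, 1} such that β'(u) = f(u)·(1, ε₁, ε₂, ε₃) for all u ∈ J. -/
noncomputable section

lemma sign_const_aux {J : Set ℝ} (hJ : IsPreconnected J) {g : ℝ → ℝ}
    (hg : ContinuousOn g J) (h : ∀ u ∈ J, g u = 1 ∨ g u = -1)
    {a b : ℝ} (ha : a ∈ J) (hb : b ∈ J) : g b = g a := by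
  by_contra hne
  have key : ∀ x y : ℝ, x ∈ J → y ∈ J → g x = -1 → g y = 1 → False := by
    intro x y hx hy hx1 hy1
    have h0 : (0:ℝ) ∈ Set.Icc (g x) (g y) := by rw [hx1, hy1]; norm_num
    obtain ⟨z, hz, hz0⟩ := hJ.intermediate_value hx hy hg h0
    rcases h z hz with h1 | h1 <;> rw [hz0] at h1 <;> norm_num at h1
  rcases h a ha with h1 | h1 <;> rcases h b hb with h2 | h2
  · exact hne (h2.trans h1.symm)
  · exact key b a hb ha h2 h1
  · exact key a b ha hb h1 h2
  · exact hne (h2.trans h1.symm)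

/-- if `β = (β₁,β₂,β₃,β₄)` is a `C¹` null curve in `ℝ⁴₂` on a connected
open interval `J` with `(β₁')² = (β₃')² = (β₄')²` on `J` and `β₁'` never vanishing
on `J`, then there are a nonvanishing continuous function `f` on `J` and signs
`ε₁, ε₂, ε₃ ∈ {−1,1}` with `β'(u) = f(u)·(1, ε₁, ε₂, ε₃)` for all `u ∈ J`. -/
theorem stmt3 (β₁ β₂ β₃ β₄ : ℝ → ℝ) (J : Set ℝ)
    (hJopen : IsOpen J) (hJconn : IsConnected J)
    (hβ₁ : ContDiffOn ℝ 1 β₁ J) (hβ₂ : ContDiffOn ℝ 1 β₂ J)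
    (hβ₃ : ContDiffOn ℝ 1 β₃ J) (hβ₄ : ContDiffOn ℝ 1 β₄ J)
    (hnull : ∀ u ∈ J, (deriv β₁ u) ^ 2 + (deriv β₂ u) ^ 2
      - (deriv β₃ u) ^ 2 - (deriv β₄ u) ^ 2 = 0)
    (h13 : ∀ u ∈ J, (deriv β₁ u) ^ 2 = (deriv β₃ u) ^ 2)
    (h14 : ∀ u ∈ J, (deriv β₁ u) ^ 2 = (deriv β₄ u) ^ 2)
    (hne : ∀ u ∈ J, deriv β₁ u ≠ 0) :
    ∃ f : ℝ → ℝ, ContinuousOn f J ∧ (∀ u ∈ J, f u ≠ 0) ∧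
      ∃ ε₁ ε₂ ε₃ : ℝ,
        (ε₁ = 1 ∨ ε₁ = -1) ∧ (ε₂ = 1 ∨ ε₂ = -1) ∧ (ε₃ = 1 ∨ ε₃ = -1) ∧
        ∀ u ∈ J,
          deriv β₁ u = f u ∧
          deriv β₂ u = f u * ε₁ ∧
          deriv β₃ u = f u * ε₂ ∧
          deriv β₄ u = f u * ε₃ := by
  obtain ⟨u₀, hu₀⟩ := hJconn.nonempty
  have hc1 : ContinuousOn (deriv β₁) J :=
    hβ₁.continuousOn_deriv_of_isOpen hJopen le_rfl
  have h12 : ∀ u ∈ J, (deriv β₁ u) ^ 2 = (deriv β₂ u) ^ 2 := by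
    intro u hu
    have h1 := hnull u hu
    have h2 := h13 u hu
    have h3 := h14 u hu
    nlinarith
  have key : ∀ (βi : ℝ → ℝ), ContDiffOn ℝ 1 βi J →
      (∀ u ∈ J, (deriv β₁ u) ^ 2 = (deriv βi u) ^ 2) →
      ∃ ε : ℝ, (ε = 1 ∨ ε = -1) ∧ ∀ u ∈ J, deriv βi u = deriv β₁ u * ε := by
    intro βi hβi h
    set g : ℝ → ℝ := fun u => deriv βi u / deriv β₁ u with hg
    have hgc : ContinuousOn g J :=
      (hβi.continuousOn_deriv_of_isOpen hJopen le_rfl).div hc1 hne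
    have hval : ∀ u ∈ J, g u = 1 ∨ g u = -1 := by
      intro u hu
      have hne' := hne u hu
      have h' := h u hu
      have hsq : (g u - 1) * (g u + 1) = 0 := by
        simp only [hg]
        field_simp
        nlinarith
      rcases mul_eq_zero.mp hsq with h1 | h1
      · left; linarith
      · right; linarith
    refine ⟨g u₀, hval u₀ hu₀, fun u hu => ?_⟩
    have := sign_const_aux hJconn.isPreconnected hgc hval hu₀ hu
    rw [← this]
    simp only [hg]
    rw [mul_div_assoc', mul_comm, mul_div_assoc, div_self (hne u hu), mul_one]
  obtain ⟨ε₁, hε₁, he₁⟩ := key β₂ hβ₂ h12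
  obtain ⟨ε₂, hε₂, he₂⟩ := key β₃ hβ₃ h13
  obtain ⟨ε₃, hε₃, he₃⟩ := key β₄ hβ₄ h14
  exact ⟨deriv β₁, hc1, hne, ε₁, ε₂, ε₃, hε₁, hε₂, hε₃,
    fun u hu => ⟨rfl, he₁ u hu, he₂ u hu, he₃ u hu⟩⟩
end
end

section
/- Let f, g, h : J → ℝ be functions with f(u) ≠ 0, 1 + g(u) ≠ 0 and 1 + h(u) ≠ 0 for all u ∈ J, and suppose a curve β : J → ℝ⁴₂ satisfies β'(u) = f(u)·(1 + g(u)h(u), g(u) − h(u), g(u) + h(u), 1 − g(u)h(u)). Define g̃ = (1−h)/(1+h), h̃ = (1−g)/(1+g), and f̃ = 2f/((1+g̃)(1+h̃)). Then β'(u) = f̃(u)·(1 + g̃(u)h̃(u), g̃(u) − h̃(u), 1 − g̃(u)h̃(u), g̃(u) + h̃(u)) for all u ∈ J. -/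
noncomputable section

/-- if `β'(u) = f(u)·(1 + gh, g − h, g + h, 1 − gh)` with
`f ≠ 0`, `1 + g ≠ 0`, `1 + h ≠ 0` on `J`, then with `g̃ = (1−h)/(1+h)`,
`h̃ = (1−g)/(1+g)` and `f̃ = 2f/((1+g̃)(1+h̃))` one has
`β'(u) = f̃(u)·(1 + g̃h̃, g̃ − h̃, 1 − g̃h̃, g̃ + h̃)` on `J`. -/
theorem stmt4 (f g h : ℝ → ℝ) (J : Set ℝ) (β : ℝ → Fin 4 → ℝ)
    (hf : ∀ u ∈ J, f u ≠ 0)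
    (hg : ∀ u ∈ J, 1 + g u ≠ 0)
    (hh : ∀ u ∈ J, 1 + h u ≠ 0)
    (hβ : ∀ u ∈ J, deriv β u =
      f u • ![1 + g u * h u, g u - h u, g u + h u, 1 - g u * h u]) :
    ∀ u ∈ J,
      deriv β u =
        (2 * f u / ((1 + (1 - h u) / (1 + h u)) * (1 + (1 - g u) / (1 + g u)))) •
          ![1 + ((1 - h u) / (1 + h u)) * ((1 - g u) / (1 + g u)),
            (1 - h u) / (1 + h u) - (1 - g u) / (1 + g u),
            1 - ((1 - h u) / (1 + h u)) * ((1 - g u) / (1 + g u)),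
            (1 - h u) / (1 + h u) + (1 - g u) / (1 + g u)] := by
  intro u hu
  rw [hβ u hu]
  have hg' := hg u hu
  have hh' := hh u hu
  funext i
  fin_cases i <;>
    simp [Matrix.smul_cons, smul_eq_mul] <;>
    field_simp <;> ring
end
end

section
/- Let f₁, g₁, h₁ and f₂, g₂, h₂ be smooth real functions of one variable and let β, θ be curves with β'(t) = f₁(t)·(1 + g₁(t)h₁(t), g₁(t) − h₁(t), 1 − g₁(t)h₁(t), g₁(t) + h₁(t)) and θ'(s) = f₂(s)·(1 + g₂(s)h₂(s), g₂(s) − h₂(s), 1 − g₂(s)h₂(s), g₂(s) + h₂(s)). Then ⟨β'(t), θ'(s)⟩ = 2 f₁(t) f₂(s) (g₁(t) − g₂(s)) (h₁(t) − h₂(s)) for all t, s. Consequently, for Ψ(u,v) = β(u+v) + θ(u−v) the coefficients of the first fundamental form are E = ⟨Ψ_u,Ψ_u⟩ = 4 f₁(u+v) f₂(u−v) (g₁(u+v) − g₂(u−v)) (h₁(u+v) − h₂(u−v)), F = ⟨Ψ_u,Ψ_v⟩ = 0, and G = ⟨Ψ_v,Ψ_v⟩ = −E. -/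
noncomputable section

/-- The neutral pseudo-Euclidean inner product on `ℝ⁴₂`:
`⟨x,y⟩ = x₁y₁ + x₂y₂ − x₃y₃ − x₄y₄`. -/
def nip (x y : Fin 4 → ℝ) : ℝ := x 0 * y 0 + x 1 * y 1 - x 2 * y 2 - x 3 * y 3

/-- The Weierstrass direction vector `(1 + gh, g − h, 1 − gh, g + h)`. -/
def wvec (g h : ℝ) : Fin 4 → ℝ := ![1 + g * h, g - h, 1 - g * h, g + h]

/-- First partial derivative (with respect to `u`) of a map `Ψ : ℝ → ℝ → ℝ⁴₂`. -/
def d1 (Ψ : ℝ → ℝ → Fin 4 → ℝ) (u v : ℝ) : Fin 4 → ℝ := deriv (fun t => Ψ t v) u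

/-- Second partial derivative (with respect to `v`) of a map `Ψ : ℝ → ℝ → ℝ⁴₂`. -/
def d2 (Ψ : ℝ → ℝ → Fin 4 → ℝ) (u v : ℝ) : Fin 4 → ℝ := deriv (fun t => Ψ u t) v

/-- for Weierstrass-type curves
`β'(t) = f₁(t)·(1 + g₁h₁, g₁ − h₁, 1 − g₁h₁, g₁ + h₁)` and
`θ'(s) = f₂(s)·(1 + g₂h₂, g₂ − h₂, 1 − g₂h₂, g₂ + h₂)` one has
`⟨β'(t), θ'(s)⟩ = 2 f₁(t) f₂(s) (g₁(t) − g₂(s)) (h₁(t) − h₂(s))`; consequently, for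
`Ψ(u,v) = β(u+v) + θ(u−v)` the coefficients of the first fundamental form are
`E = 4 f₁ f₂ (g₁ − g₂)(h₁ − h₂)` (arguments `u+v`, `u−v`), `F = 0`, `G = −E`. -/
theorem stmt7 (f₁ g₁ h₁ f₂ g₂ h₂ : ℝ → ℝ)
    (hf₁ : ContDiff ℝ (⊤ : ℕ∞) f₁) (hg₁ : ContDiff ℝ (⊤ : ℕ∞) g₁) (hh₁ : ContDiff ℝ (⊤ : ℕ∞) h₁)
    (hf₂ : ContDiff ℝ (⊤ : ℕ∞) f₂) (hg₂ : ContDiff ℝ (⊤ : ℕ∞) g₂) (hh₂ : ContDiff ℝ (⊤ : ℕ∞) h₂)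
    (β θ : ℝ → Fin 4 → ℝ)
    (hβ : ∀ t : ℝ, HasDerivAt β (f₁ t • wvec (g₁ t) (h₁ t)) t)
    (hθ : ∀ s : ℝ, HasDerivAt θ (f₂ s • wvec (g₂ s) (h₂ s)) s)
    (Ψ : ℝ → ℝ → Fin 4 → ℝ)
    (hΨ : ∀ u v : ℝ, Ψ u v = β (u + v) + θ (u - v)) :
    (∀ t s : ℝ, nip (deriv β t) (deriv θ s)
      = 2 * f₁ t * f₂ s * (g₁ t - g₂ s) * (h₁ t - h₂ s)) ∧
    (∀ u v : ℝ,
      nip (d1 Ψ u v) (d1 Ψ u v)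
        = 4 * f₁ (u + v) * f₂ (u - v) * (g₁ (u + v) - g₂ (u - v))
            * (h₁ (u + v) - h₂ (u - v)) ∧
      nip (d1 Ψ u v) (d2 Ψ u v) = 0 ∧
      nip (d2 Ψ u v) (d2 Ψ u v) = -nip (d1 Ψ u v) (d1 Ψ u v)) := by
  have key : ∀ a b g h g' h' : ℝ,
      nip (a • wvec g h) (b • wvec g' h') = 2 * a * b * (g - g') * (h - h') := by
    intro a b g h g' h'
    simp [nip, wvec, Pi.smul_apply, smul_eq_mul]
    ring
  constructor
  · intro t s
    rw [(hβ t).deriv, (hθ s).deriv, key]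
  · intro u v
    set A := f₁ (u + v) • wvec (g₁ (u + v)) (h₁ (u + v)) with hA
    set B := f₂ (u - v) • wvec (g₂ (u - v)) (h₂ (u - v)) with hB
    have hd1 : d1 Ψ u v = A + B := by
      have h1 : HasDerivAt (fun t => β (t + v)) A u := by
        have := (hβ (u + v)).scomp u ((hasDerivAt_id u).add_const v)
        simpa [Function.comp_def] using this
      have h2 : HasDerivAt (fun t => θ (t - v)) B u := by
        have := (hθ (u - v)).scomp u ((hasDerivAt_id u).sub_const v)
        simpa [Function.comp_def] using this
      have : HasDerivAt (fun t => Ψ t v) (A + B) u := by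
        have := h1.add h2
        refine this.congr_of_eventuallyEq ?_
        filter_upwards with t
        rw [hΨ]; rfl
      exact this.deriv
    have hd2 : d2 Ψ u v = A - B := by
      have h1 : HasDerivAt (fun t => β (u + t)) A v := by
        have := (hβ (u + v)).scomp v ((hasDerivAt_id v).const_add u)
        simpa [Function.comp_def] using this
      have h2 : HasDerivAt (fun t => θ (u - t)) (-B) v := by
        have := (hθ (u - v)).scomp v ((hasDerivAt_id v).const_sub u)
        simpa [Function.comp_def] using this
      have : HasDerivAt (fun t => Ψ u t) (A - B) v := by
        have := h1.add h2
        refine (this.congr_of_eventuallyEq ?_).congr_deriv (by abel)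
        filter_upwards with t
        rw [hΨ]; rfl
      exact this.deriv
    have nipAA : nip A A = 0 := by rw [hA, key]; ring
    have nipBB : nip B B = 0 := by rw [hB, key]; ring
    have nipAB : nip A B
        = 2 * f₁ (u + v) * f₂ (u - v) * (g₁ (u + v) - g₂ (u - v))
            * (h₁ (u + v) - h₂ (u - v)) := by rw [hA, hB, key]
    have nipBA : nip B A = nip A B := by simp [nip]; ring
    have expand : ∀ x y z w : Fin 4 → ℝ,
        nip (x + y) (z + w) = nip x z + nip x w + nip y z + nip y w := by
      intro x y z w
      simp [nip, Pi.add_apply]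
      ring
    have hd2' : d2 Ψ u v = A + (-B) := by rw [hd2]; abel
    refine ⟨?_, ?_, ?_⟩
    · rw [hd1, expand, nipAA, nipBB, nipBA, nipAB]; ring
    · rw [hd1, hd2', expand]
      have e1 : nip A (-B) = -nip A B := by simp [nip]; ring
      have e2 : nip B (-B) = -nip B B := by simp [nip]; ring
      rw [nipAA, nipBA, e1, e2, nipBB]; ring
    · rw [hd1, hd2', expand, expand]
      have e1 : nip A (-B) = -nip A B := by simp [nip]; ring
      have e2 : nip (-B) A = -nip B A := by simp [nip]; ring
      have e3 : nip (-B) (-B) = nip B B := by simp [nip]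
      rw [nipAA, e1, e2, e3, nipBA, nipAB, nipBB]; ring
end
end

section
/- Let f₁, g₁, h₁ and f₂, g₂, h₂ be smooth real functions of one variable and let β, θ be curves with β'(t) = f₁(t)·(1 + g₁h₁, g₁ − h₁, 1 − g₁h₁, g₁ + h₁)(t) and θ'(s) = f₂(s)·(1 + g₂h₂, g₂ − h₂, 1 − g₂h₂, g₂ + h₂)(s). Then the following identities hold: ⟨β'(t), β''(t)⟩ = 0; ⟨β''(t), β''(t)⟩ = −4 f₁(t)² g₁'(t) h₁'(t); ⟨θ''(s), θ''(s)⟩ = −4 f₂(s)² g₂'(s) h₂'(s); ⟨θ''(s), β'(t)⟩ = 2 f₁(t) f₂'(s)(g₂(s) − g₁(t))(h₂(s) − h₁(t)) + 2 f₁(t) f₂(s)((g₂(s) − g₁(t))h₂'(s) + (h₂(s) − h₁(t))g₂'(s)); and ⟨β''(t), θ'(s)⟩ = 2 f₂(s) f₁'(t)(g₂(s) − g₁(t))(h₂(s) − h₁(t)) + 2 f₁(t) f₂(s)((h₁(t) − h₂(s))g₁'(t) + (g₁(t) − g₂(s))h₁'(t)). -/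
noncomputable section

lemma second_deriv (f g h : ℝ → ℝ) (hf : ContDiff ℝ (⊤ : ℕ∞) f) (hg : ContDiff ℝ (⊤ : ℕ∞) g)
    (hh : ContDiff ℝ (⊤ : ℕ∞) h) (β : ℝ → Fin 4 → ℝ)
    (hβ : ∀ t : ℝ, HasDerivAt β (f t • wvec (g t) (h t)) t) (t : ℝ) :
    deriv (deriv β) t =
      ![deriv f t * (1 + g t * h t) + f t * (deriv g t * h t + g t * deriv h t),
        deriv f t * (g t - h t) + f t * (deriv g t - deriv h t),
        deriv f t * (1 - g t * h t) - f t * (deriv g t * h t + g t * deriv h t),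
        deriv f t * (g t + h t) + f t * (deriv g t + deriv h t)] := by
  have hd : deriv β = fun u => f u • wvec (g u) (h u) := funext fun u => (hβ u).deriv
  rw [hd]
  apply HasDerivAt.deriv
  rw [hasDerivAt_pi]
  have Hf := (hf.differentiable (by simp) t).hasDerivAt
  have Hg := (hg.differentiable (by simp) t).hasDerivAt
  have Hh := (hh.differentiable (by simp) t).hasDerivAt
  intro i
  fin_cases i <;> simp only [Pi.smul_apply, smul_eq_mul, wvec, Matrix.cons_val_zero,
    Matrix.cons_val_one, Matrix.head_cons, Matrix.cons_val_two, Matrix.tail_cons,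
    Matrix.cons_val_three, Fin.isValue]
  · exact (Hf.mul ((hasDerivAt_const t 1).add (Hg.mul Hh))).congr_deriv (by simp; try ring)
  · exact (Hf.mul (Hg.sub Hh)).congr_deriv (by simp; try ring)
  · exact (Hf.mul ((hasDerivAt_const t 1).sub (Hg.mul Hh))).congr_deriv (by simp; try ring)
  · exact (Hf.mul (Hg.add Hh)).congr_deriv (by simp; try ring)

/-- for Weierstrass-type curves
`β'(t) = f₁(t)·(1 + g₁h₁, g₁ − h₁, 1 − g₁h₁, g₁ + h₁)(t)` and
`θ'(s) = f₂(s)·(1 + g₂h₂, g₂ − h₂, 1 − g₂h₂, g₂ + h₂)(s)` the following hold: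
`⟨β',β''⟩ = 0`, `⟨β'',β''⟩ = −4f₁²g₁'h₁'`, `⟨θ'',θ''⟩ = −4f₂²g₂'h₂'`,
`⟨θ'',β'⟩ = 2f₁f₂'(g₂−g₁)(h₂−h₁) + 2f₁f₂((g₂−g₁)h₂' + (h₂−h₁)g₂')`,
`⟨β'',θ'⟩ = 2f₂f₁'(g₂−g₁)(h₂−h₁) + 2f₁f₂((h₁−h₂)g₁' + (g₁−g₂)h₁')`. -/
theorem stmt8 (f₁ g₁ h₁ f₂ g₂ h₂ : ℝ → ℝ)
    (hf₁ : ContDiff ℝ (⊤ : ℕ∞) f₁) (hg₁ : ContDiff ℝ (⊤ : ℕ∞) g₁) (hh₁ : ContDiff ℝ (⊤ : ℕ∞) h₁)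
    (hf₂ : ContDiff ℝ (⊤ : ℕ∞) f₂) (hg₂ : ContDiff ℝ (⊤ : ℕ∞) g₂) (hh₂ : ContDiff ℝ (⊤ : ℕ∞) h₂)
    (β θ : ℝ → Fin 4 → ℝ)
    (hβ : ∀ t : ℝ, HasDerivAt β (f₁ t • wvec (g₁ t) (h₁ t)) t)
    (hθ : ∀ s : ℝ, HasDerivAt θ (f₂ s • wvec (g₂ s) (h₂ s)) s) :
    ∀ t s : ℝ,
      nip (deriv β t) (deriv (deriv β) t) = 0 ∧
      nip (deriv (deriv β) t) (deriv (deriv β) t)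
        = -4 * (f₁ t) ^ 2 * deriv g₁ t * deriv h₁ t ∧
      nip (deriv (deriv θ) s) (deriv (deriv θ) s)
        = -4 * (f₂ s) ^ 2 * deriv g₂ s * deriv h₂ s ∧
      nip (deriv (deriv θ) s) (deriv β t)
        = 2 * f₁ t * deriv f₂ s * (g₂ s - g₁ t) * (h₂ s - h₁ t)
          + 2 * f₁ t * f₂ s * ((g₂ s - g₁ t) * deriv h₂ s
            + (h₂ s - h₁ t) * deriv g₂ s) ∧
      nip (deriv (deriv β) t) (deriv θ s)
        = 2 * f₂ s * deriv f₁ t * (g₂ s - g₁ t) * (h₂ s - h₁ t)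
          + 2 * f₁ t * f₂ s * ((h₁ t - h₂ s) * deriv g₁ t
            + (g₁ t - g₂ s) * deriv h₁ t) := by
  intro t s
  have dβ : deriv β t = f₁ t • wvec (g₁ t) (h₁ t) := (hβ t).deriv
  have dθ : deriv θ s = f₂ s • wvec (g₂ s) (h₂ s) := (hθ s).deriv
  have Dβ := second_deriv f₁ g₁ h₁ hf₁ hg₁ hh₁ β hβ t
  have Dθ := second_deriv f₂ g₂ h₂ hf₂ hg₂ hh₂ θ hθ s
  refine ⟨?_, ?_, ?_, ?_, ?_⟩ <;>
    simp [nip, wvec, dβ, dθ, Dβ, Dθ] <;> ring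
end
end

section
/- In the setting of the Weierstrass representation Ψ(u,v) = β(u+v) + θ(u−v) with β'(t) = f₁(t)·(1 + g₁h₁, g₁ − h₁, 1 − g₁h₁, g₁ + h₁)(t), θ'(s) = f₂(s)·(1 + g₂h₂, g₂ − h₂, 1 − g₂h₂, g₂ + h₂)(s), assume E := ⟨Ψ_u,Ψ_u⟩ ≠ 0 at a point and let n₁, n₂ be the normal components of Ψ_uu and Ψ_uv (i.e. n_i ⊥ Ψ_u, Ψ_v and Ψ_uu − n₁, Ψ_uv − n₂ ∈ span{Ψ_u,Ψ_v}). Then ⟨n₁, n₂⟩ = ⟨β''(u+v), β''(u+v)⟩ − ⟨θ''(u−v), θ''(u−v)⟩ = −4 f₁(u+v)² g₁'(u+v) h₁'(u+v) + 4 f₂(u−v)² g₂'(u−v) h₂'(u−v). In particular, if f₁ = 1/(4√|g₁'h₁'|) and f₂ = 1/(4√|g₂'h₂'|) with g₁'h₁' and g₂'h₂' of the same sign, then ⟨n₁, n₂⟩ = 0, i.e. σ(Ψ_u,Ψ_u) and σ(Ψ_u,Ψ_v) are orthogonal. -/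
noncomputable section

/-- Derivative of the Weierstrass direction vector along `t ↦ wvec (g t) (h t)`. -/
def wder (g h dg dh : ℝ) : Fin 4 → ℝ :=
  ![dg * h + g * dh, dg - dh, -(dg * h + g * dh), dg + dh]

lemma nip_comm (x y : Fin 4 → ℝ) : nip x y = nip y x := by simp [nip]; ring

lemma nip_add_left (x y z : Fin 4 → ℝ) : nip (x + y) z = nip x z + nip y z := by
  simp [nip]; ring

lemma nip_add_right (x y z : Fin 4 → ℝ) : nip x (y + z) = nip x y + nip x z := by
  simp [nip]; ring

lemma nip_sub_left (x y z : Fin 4 → ℝ) : nip (x - y) z = nip x z - nip y z := by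
  simp [nip]; ring

lemma nip_sub_right (x y z : Fin 4 → ℝ) : nip x (y - z) = nip x y - nip x z := by
  simp [nip]; ring

lemma nip_smul_left (c : ℝ) (x y : Fin 4 → ℝ) : nip (c • x) y = c * nip x y := by
  simp [nip]; ring

lemma nip_smul_right (c : ℝ) (x y : Fin 4 → ℝ) : nip x (c • y) = c * nip x y := by
  simp [nip]; ring

lemma nip_ww (g h : ℝ) : nip (wvec g h) (wvec g h) = 0 := by
  simp [nip, wvec]; ring

lemma nip_wd (g h dg dh : ℝ) : nip (wvec g h) (wder g h dg dh) = 0 := by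
  simp [nip, wvec, wder]; ring

lemma nip_dw (g h dg dh : ℝ) : nip (wder g h dg dh) (wvec g h) = 0 := by
  simp [nip, wvec, wder]; ring

lemma nip_dd (g h dg dh : ℝ) : nip (wder g h dg dh) (wder g h dg dh) = -(4 * dg * dh) := by
  simp [nip, wder]; ring

lemma wvec_hasDerivAt (g h : ℝ → ℝ) (hg : ContDiff ℝ (⊤ : ℕ∞) g) (hh : ContDiff ℝ (⊤ : ℕ∞) h) (t : ℝ) :
    HasDerivAt (fun s => wvec (g s) (h s)) (wder (g t) (h t) (deriv g t) (deriv h t)) t := by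
  have hg' : HasDerivAt g (deriv g t) t := (hg.differentiable (by simp) t).hasDerivAt
  have hh' : HasDerivAt h (deriv h t) t := (hh.differentiable (by simp) t).hasDerivAt
  rw [hasDerivAt_pi]
  intro i
  fin_cases i
  · simpa [wvec, wder, Pi.add_def, Pi.sub_def, Pi.mul_def] using (hasDerivAt_const t (1:ℝ)).add (hg'.mul hh')
  · simpa [wvec, wder, Pi.add_def, Pi.sub_def, Pi.mul_def] using hg'.sub hh'
  · simpa [wvec, wder, Pi.add_def, Pi.sub_def, Pi.mul_def] using (hasDerivAt_const t (1:ℝ)).sub (hg'.mul hh')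
  · simpa [wvec, wder, Pi.add_def, Pi.sub_def, Pi.mul_def] using hg'.add hh'

lemma path_hasDerivAt (f g h : ℝ → ℝ) (hf : ContDiff ℝ (⊤ : ℕ∞) f) (hg : ContDiff ℝ (⊤ : ℕ∞) g)
    (hh : ContDiff ℝ (⊤ : ℕ∞) h) (t : ℝ) :
    HasDerivAt (fun s => f s • wvec (g s) (h s))
      (f t • wder (g t) (h t) (deriv g t) (deriv h t) + deriv f t • wvec (g t) (h t)) t := by
  have hf' : HasDerivAt f (deriv f t) t := (hf.differentiable (by simp) t).hasDerivAt
  exact hf'.smul (wvec_hasDerivAt g h hg hh t)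


lemma quarter_pos (dg dh x : ℝ) (hx : x ^ 2 = dg * dh) (hx0 : x ≠ 0) :
    4 * (1 / (4 * x)) ^ 2 * dg * dh = 1 / 4 := by
  field_simp
  linear_combination -hx

lemma quarter_neg (dg dh x : ℝ) (hx : x ^ 2 = -(dg * dh)) (hx0 : x ≠ 0) :
    4 * (1 / (4 * x)) ^ 2 * dg * dh = -(1 / 4) := by
  field_simp
  linear_combination hx

/-- The central algebraic lemma. -/
lemma key (B T B' T' n₁ n₂ : Fin 4 → ℝ)
    (e1 : nip B B = 0) (e2 : nip T T = 0) (e3 : nip B B' = 0) (e4 : nip T T' = 0)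
    (hE : nip (B + T) (B + T) ≠ 0)
    (hn₁X : nip n₁ (B + T) = 0) (hn₁Y : nip n₁ (B - T) = 0)
    (hn₂X : nip n₂ (B + T) = 0) (hn₂Y : nip n₂ (B - T) = 0)
    (hs₁ : (B' + T') - n₁ ∈ Submodule.span ℝ ({B + T, B - T} : Set (Fin 4 → ℝ)))
    (hs₂ : (B' - T') - n₂ ∈ Submodule.span ℝ ({B + T, B - T} : Set (Fin 4 → ℝ))) :
    nip n₁ n₂ = nip B' B' - nip T' T' := by
  obtain ⟨a₁, b₁, h1⟩ := Submodule.mem_span_pair.mp hs₁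
  obtain ⟨a₂, b₂, h2⟩ := Submodule.mem_span_pair.mp hs₂
  have hn1 : n₁ = (B' + T') - (a₁ • (B + T) + b₁ • (B - T)) := by rw [h1]; abel
  have hn2 : n₂ = (B' - T') - (a₂ • (B + T) + b₂ • (B - T)) := by rw [h2]; abel
  have c1 : nip T B = nip B T := nip_comm _ _
  have c2 : nip B' B = nip B B' := nip_comm _ _
  have c3 : nip T' T = nip T T' := nip_comm _ _
  have c4 : nip T B' = nip B' T := nip_comm _ _
  have c5 : nip T' B = nip B T' := nip_comm _ _
  have c6 : nip T' B' = nip B' T' := nip_comm _ _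
  rw [hn1] at hn₁X hn₁Y
  rw [hn2] at hn₂X hn₂Y
  simp only [nip_sub_left, nip_sub_right, nip_add_left, nip_add_right, nip_smul_left,
    nip_smul_right, c1, c2, c3, c4, c5, c6, e1, e2, e3, e4] at hn₁X hn₁Y hn₂X hn₂Y hE
  have hp : nip B T ≠ 0 := by
    intro h; apply hE; rw [h]; ring
  have E1 : nip B' T + nip B T' - 2 * a₁ * nip B T = 0 := by linear_combination hn₁X
  have E2 : nip B T' - nip B' T + 2 * b₁ * nip B T = 0 := by linear_combination hn₁Y
  have E3 : nip B' T - nip B T' - 2 * a₂ * nip B T = 0 := by linear_combination hn₂X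
  have E4 : - nip B' T - nip B T' + 2 * b₂ * nip B T = 0 := by linear_combination hn₂Y
  have h2p : (2:ℝ) * nip B T ≠ 0 := by
    intro h; apply hp; linarith
  have ha : a₂ = b₁ := by
    apply mul_left_cancel₀ h2p
    linear_combination -E2 - E3
  have hb : b₂ = a₁ := by
    apply mul_left_cancel₀ h2p
    linear_combination E4 + E1
  subst ha hb
  rw [hn1, hn2]
  simp only [nip_sub_left, nip_sub_right, nip_add_left, nip_add_right, nip_smul_left,
    nip_smul_right, c1, c2, c3, c4, c5, c6, e1, e2, e3, e4]
  ring

/-- for a Weierstrass-type surface `Ψ(u,v) = β(u+v) + θ(u−v)` with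
`E = ⟨Ψ_u,Ψ_u⟩ ≠ 0` at a point, and `n₁, n₂` the normal components of `Ψ_uu`,
`Ψ_uv`, one has `⟨n₁,n₂⟩ = ⟨β'',β''⟩ − ⟨θ'',θ''⟩ = −4f₁²g₁'h₁' + 4f₂²g₂'h₂'`
(arguments `u+v`, `u−v`); in particular if `f₁ = 1/(4√|g₁'h₁'|)`,
`f₂ = 1/(4√|g₂'h₂'|)` and `g₁'h₁'`, `g₂'h₂'` have the same sign at the point, then
`⟨n₁,n₂⟩ = 0`. -/
theorem stmt10 (f₁ g₁ h₁ f₂ g₂ h₂ : ℝ → ℝ)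
    (hf₁ : ContDiff ℝ (⊤ : ℕ∞) f₁) (hg₁ : ContDiff ℝ (⊤ : ℕ∞) g₁) (hh₁ : ContDiff ℝ (⊤ : ℕ∞) h₁)
    (hf₂ : ContDiff ℝ (⊤ : ℕ∞) f₂) (hg₂ : ContDiff ℝ (⊤ : ℕ∞) g₂) (hh₂ : ContDiff ℝ (⊤ : ℕ∞) h₂)
    (β θ : ℝ → Fin 4 → ℝ)
    (hβ : ∀ t : ℝ, HasDerivAt β (f₁ t • wvec (g₁ t) (h₁ t)) t)
    (hθ : ∀ s : ℝ, HasDerivAt θ (f₂ s • wvec (g₂ s) (h₂ s)) s)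
    (Ψ : ℝ → ℝ → Fin 4 → ℝ)
    (hΨ : ∀ u v : ℝ, Ψ u v = β (u + v) + θ (u - v))
    (u v : ℝ)
    (hE : nip (d1 Ψ u v) (d1 Ψ u v) ≠ 0)
    (n₁ n₂ : Fin 4 → ℝ)
    (hn₁ : nip n₁ (d1 Ψ u v) = 0 ∧ nip n₁ (d2 Ψ u v) = 0 ∧
      d1 (d1 Ψ) u v - n₁ ∈
        Submodule.span ℝ ({d1 Ψ u v, d2 Ψ u v} : Set (Fin 4 → ℝ)))
    (hn₂ : nip n₂ (d1 Ψ u v) = 0 ∧ nip n₂ (d2 Ψ u v) = 0 ∧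
      d2 (d1 Ψ) u v - n₂ ∈
        Submodule.span ℝ ({d1 Ψ u v, d2 Ψ u v} : Set (Fin 4 → ℝ))) :
    nip n₁ n₂ = nip (deriv (deriv β) (u + v)) (deriv (deriv β) (u + v))
        - nip (deriv (deriv θ) (u - v)) (deriv (deriv θ) (u - v)) ∧
    nip n₁ n₂ = -4 * (f₁ (u + v)) ^ 2 * deriv g₁ (u + v) * deriv h₁ (u + v)
        + 4 * (f₂ (u - v)) ^ 2 * deriv g₂ (u - v) * deriv h₂ (u - v) ∧
    ((∀ t : ℝ, f₁ t = 1 / (4 * Real.sqrt |deriv g₁ t * deriv h₁ t|)) →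
      (∀ s : ℝ, f₂ s = 1 / (4 * Real.sqrt |deriv g₂ s * deriv h₂ s|)) →
      0 < deriv g₁ (u + v) * deriv h₁ (u + v)
            * (deriv g₂ (u - v) * deriv h₂ (u - v)) →
      nip n₁ n₂ = 0) := by
  obtain ⟨hn₁X, hn₁Y, hn₁s⟩ := hn₁
  obtain ⟨hn₂X, hn₂Y, hn₂s⟩ := hn₂
  -- first derivatives of Ψ
  have hd1 : ∀ t s : ℝ, d1 Ψ t s
      = f₁ (t + s) • wvec (g₁ (t + s)) (h₁ (t + s))
        + f₂ (t - s) • wvec (g₂ (t - s)) (h₂ (t - s)) := by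
    intro t s
    have h1 : HasDerivAt (fun x => β (x + s))
        (f₁ (t + s) • wvec (g₁ (t + s)) (h₁ (t + s))) t := by
      simpa [Function.comp_def] using HasDerivAt.scomp t (hβ (t + s)) ((hasDerivAt_id t).add_const s)
    have h2 : HasDerivAt (fun x => θ (x - s))
        (f₂ (t - s) • wvec (g₂ (t - s)) (h₂ (t - s))) t := by
      simpa [Function.comp_def] using HasDerivAt.scomp t (hθ (t - s)) ((hasDerivAt_id t).sub_const s)
    have hfun : (fun x => Ψ x s) = fun x => β (x + s) + θ (x - s) := funext fun x => hΨ x s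
    rw [d1, hfun]
    exact (h1.add h2).deriv
  have hd2 : ∀ t s : ℝ, d2 Ψ t s
      = f₁ (t + s) • wvec (g₁ (t + s)) (h₁ (t + s))
        - f₂ (t - s) • wvec (g₂ (t - s)) (h₂ (t - s)) := by
    intro t s
    have h1 : HasDerivAt (fun x => β (t + x))
        (f₁ (t + s) • wvec (g₁ (t + s)) (h₁ (t + s))) s := by
      simpa [Function.comp_def] using HasDerivAt.scomp s (hβ (t + s)) ((hasDerivAt_id s).const_add t)
    have h2 : HasDerivAt (fun x => θ (t - x))
        (-(f₂ (t - s) • wvec (g₂ (t - s)) (h₂ (t - s)))) s := by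
      simpa [Function.comp_def] using HasDerivAt.scomp s (hθ (t - s)) ((hasDerivAt_id s).const_sub t)
    have hfun : (fun x => Ψ t x) = fun x => β (t + x) + θ (t - x) := funext fun x => hΨ t x
    rw [d2, hfun, (show HasDerivAt (fun x => β (t + x) + θ (t - x)) _ s from h1.add h2).deriv]
    abel
  -- abbreviations for the second-derivative vectors
  set B' : Fin 4 → ℝ := f₁ (u + v) • wder (g₁ (u + v)) (h₁ (u + v)) (deriv g₁ (u + v)) (deriv h₁ (u + v))
      + deriv f₁ (u + v) • wvec (g₁ (u + v)) (h₁ (u + v)) with hB'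
  set T' : Fin 4 → ℝ := f₂ (u - v) • wder (g₂ (u - v)) (h₂ (u - v)) (deriv g₂ (u - v)) (deriv h₂ (u - v))
      + deriv f₂ (u - v) • wvec (g₂ (u - v)) (h₂ (u - v)) with hT'
  have hβ2 : deriv (deriv β) (u + v) = B' := by
    have hder : deriv β = fun t => f₁ t • wvec (g₁ t) (h₁ t) := funext fun t => (hβ t).deriv
    rw [hder, hB']
    exact (path_hasDerivAt f₁ g₁ h₁ hf₁ hg₁ hh₁ (u + v)).deriv
  have hθ2 : deriv (deriv θ) (u - v) = T' := by
    have hder : deriv θ = fun t => f₂ t • wvec (g₂ t) (h₂ t) := funext fun t => (hθ t).deriv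
    rw [hder, hT']
    exact (path_hasDerivAt f₂ g₂ h₂ hf₂ hg₂ hh₂ (u - v)).deriv
  -- second derivatives of Ψ
  have hU : d1 (d1 Ψ) u v = B' + T' := by
    have hfun : (fun x => d1 Ψ x v)
        = fun x => f₁ (x + v) • wvec (g₁ (x + v)) (h₁ (x + v))
          + f₂ (x - v) • wvec (g₂ (x - v)) (h₂ (x - v)) := funext fun x => hd1 x v
    have h1 : HasDerivAt (fun x => f₁ (x + v) • wvec (g₁ (x + v)) (h₁ (x + v))) B' u := by
      simpa [hB', Function.comp_def] using HasDerivAt.scomp u (path_hasDerivAt f₁ g₁ h₁ hf₁ hg₁ hh₁ (u + v))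
        ((hasDerivAt_id u).add_const v)
    have h2 : HasDerivAt (fun x => f₂ (x - v) • wvec (g₂ (x - v)) (h₂ (x - v))) T' u := by
      simpa [hT', Function.comp_def] using HasDerivAt.scomp u (path_hasDerivAt f₂ g₂ h₂ hf₂ hg₂ hh₂ (u - v))
        ((hasDerivAt_id u).sub_const v)
    rw [d1, hfun]
    exact (h1.add h2).deriv
  have hV : d2 (d1 Ψ) u v = B' - T' := by
    have hfun : (fun x => d1 Ψ u x)
        = fun x => f₁ (u + x) • wvec (g₁ (u + x)) (h₁ (u + x))
          + f₂ (u - x) • wvec (g₂ (u - x)) (h₂ (u - x)) := funext fun x => hd1 u x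
    have h1 : HasDerivAt (fun x => f₁ (u + x) • wvec (g₁ (u + x)) (h₁ (u + x))) B' v := by
      simpa [hB', Function.comp_def] using HasDerivAt.scomp v (path_hasDerivAt f₁ g₁ h₁ hf₁ hg₁ hh₁ (u + v))
        ((hasDerivAt_id v).const_add u)
    have h2 : HasDerivAt (fun x => f₂ (u - x) • wvec (g₂ (u - x)) (h₂ (u - x))) (-T') v := by
      have h0 := HasDerivAt.scomp v (path_hasDerivAt f₂ g₂ h₂ hf₂ hg₂ hh₂ (u - v))
        ((hasDerivAt_id v).const_sub u)
      rw [show -T' = (-1 : ℝ) • (f₂ (u - v) • wder (g₂ (u - v)) (h₂ (u - v)) (deriv g₂ (u - v)) (deriv h₂ (u - v))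
          + deriv f₂ (u - v) • wvec (g₂ (u - v)) (h₂ (u - v))) by rw [hT']; module]
      exact h0
    rw [d2, hfun, (show HasDerivAt (fun x => f₁ (u + x) • wvec (g₁ (u + x)) (h₁ (u + x))
      + f₂ (u - x) • wvec (g₂ (u - x)) (h₂ (u - x))) _ v from h1.add h2).deriv]
    abel
  -- base vectors
  set B : Fin 4 → ℝ := f₁ (u + v) • wvec (g₁ (u + v)) (h₁ (u + v)) with hB
  set T : Fin 4 → ℝ := f₂ (u - v) • wvec (g₂ (u - v)) (h₂ (u - v)) with hT
  have hX : d1 Ψ u v = B + T := hd1 u v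
  have hY : d2 Ψ u v = B - T := hd2 u v
  -- fundamental nip identities
  have e1 : nip B B = 0 := by
    rw [hB]; simp [nip_smul_left, nip_smul_right, nip_ww]
  have e2 : nip T T = 0 := by
    rw [hT]; simp [nip_smul_left, nip_smul_right, nip_ww]
  have e3 : nip B B' = 0 := by
    rw [hB, hB']
    simp [nip_add_right, nip_smul_left, nip_smul_right, nip_wd, nip_ww]
  have e4 : nip T T' = 0 := by
    rw [hT, hT']
    simp [nip_add_right, nip_smul_left, nip_smul_right, nip_wd, nip_ww]
  have eBB : nip B' B' = -4 * (f₁ (u + v)) ^ 2 * deriv g₁ (u + v) * deriv h₁ (u + v) := by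
    rw [hB']
    simp [nip_add_left, nip_add_right, nip_smul_left, nip_smul_right, nip_dd, nip_dw,
      nip_wd, nip_ww]
    ring
  have eTT : nip T' T' = -4 * (f₂ (u - v)) ^ 2 * deriv g₂ (u - v) * deriv h₂ (u - v) := by
    rw [hT']
    simp [nip_add_left, nip_add_right, nip_smul_left, nip_smul_right, nip_dd, nip_dw,
      nip_wd, nip_ww]
    ring
  -- main identity
  rw [hX] at hE hn₁X hn₂X
  rw [hY] at hn₁Y hn₂Y
  rw [hX, hY, hU] at hn₁s
  rw [hX, hY, hV] at hn₂s
  have hmain : nip n₁ n₂ = nip B' B' - nip T' T' :=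
    key B T B' T' n₁ n₂ e1 e2 e3 e4 hE hn₁X hn₁Y hn₂X hn₂Y hn₁s hn₂s
  refine ⟨by rw [hmain, hβ2, hθ2], ?_, ?_⟩
  · rw [hmain, eBB, eTT]; ring
  · intro hF₁ hF₂ hpos
    rw [hmain, eBB, eTT, hF₁ (u + v), hF₂ (u - v)]
    rcases mul_pos_iff.mp hpos with ⟨hp1, hp2⟩ | ⟨hq1, hq2⟩
    · have t1 : Real.sqrt |deriv g₁ (u + v) * deriv h₁ (u + v)| ≠ 0 :=
        Real.sqrt_ne_zero'.mpr (abs_pos.mpr hp1.ne')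
      have t2 : Real.sqrt |deriv g₂ (u - v) * deriv h₂ (u - v)| ≠ 0 :=
        Real.sqrt_ne_zero'.mpr (abs_pos.mpr hp2.ne')
      have s1 : Real.sqrt |deriv g₁ (u + v) * deriv h₁ (u + v)| ^ 2
          = deriv g₁ (u + v) * deriv h₁ (u + v) := by
        rw [Real.sq_sqrt (abs_nonneg _), abs_of_pos hp1]
      have s2 : Real.sqrt |deriv g₂ (u - v) * deriv h₂ (u - v)| ^ 2
          = deriv g₂ (u - v) * deriv h₂ (u - v) := by
        rw [Real.sq_sqrt (abs_nonneg _), abs_of_pos hp2]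
      have A := quarter_pos _ _ _ s1 t1
      have C := quarter_pos _ _ _ s2 t2
      linear_combination C - A
    · have t1 : Real.sqrt |deriv g₁ (u + v) * deriv h₁ (u + v)| ≠ 0 :=
        Real.sqrt_ne_zero'.mpr (abs_pos.mpr hq1.ne)
      have t2 : Real.sqrt |deriv g₂ (u - v) * deriv h₂ (u - v)| ≠ 0 :=
        Real.sqrt_ne_zero'.mpr (abs_pos.mpr hq2.ne)
      have s1 : Real.sqrt |deriv g₁ (u + v) * deriv h₁ (u + v)| ^ 2
          = -(deriv g₁ (u + v) * deriv h₁ (u + v)) := by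
        rw [Real.sq_sqrt (abs_nonneg _), abs_of_neg hq1]
      have s2 : Real.sqrt |deriv g₂ (u - v) * deriv h₂ (u - v)| ^ 2
          = -(deriv g₂ (u - v) * deriv h₂ (u - v)) := by
        rw [Real.sq_sqrt (abs_nonneg _), abs_of_neg hq2]
      have A := quarter_neg _ _ _ s1 t1
      have C := quarter_neg _ _ _ s2 t2
      linear_combination C - A
end
end

section
/- Let g₁, h₁, g₂, h₂ be smooth real functions of one variable with g₁'(t)h₁'(t) ≠ 0 and g₂'(s)h₂'(s) ≠ 0, and set f₁ = 1/(4√|g₁'h₁'|), f₂ = 1/(4√|g₂'h₂'|). Assume g₁'g₂'h₁'h₂' > 0 and (g₁(u+v) − g₂(u−v))(h₁(u+v) − h₂(u−v)) ≠ 0 on a domain D. Let β, θ be the null curves with β'(t) = f₁(t)·(1 + g₁h₁, g₁ − h₁, 1 − g₁h₁, g₁ + h₁)(t), θ'(s) = f₂(s)·(1 + g₂h₂, g₂ − h₂, 1 − g₂h₂, g₂ + h₂)(s) and Ψ(u,v) = β(u+v) + θ(u−v). Then on D: ⟨Ψ_u,Ψ_v⟩ = 0, ⟨Ψ_v,Ψ_v⟩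 = −⟨Ψ_u,Ψ_u⟩ ≠ 0, Ψ_uu = Ψ_vv, and the canonical-parameter normalization holds: ⟨Ψ_u,Ψ_u⟩² = (g₁(u+v) − g₂(u−v))² (h₁(u+v) − h₂(u−v))² / (16 g₁'(u+v) g₂'(u−v) h₁'(u+v) h₂'(u−v)). -/
noncomputable section

lemma nip_pp (a b gA hA gB hB : ℝ) :
    nip (a • wvec gA hA + b • wvec gB hB) (a • wvec gA hA + b • wvec gB hB)
      = 4 * a * b * (gA - gB) * (hA - hB) := by
  simp [nip, wvec]; ring

lemma nip_pm (a b gA hA gB hB : ℝ) :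
    nip (a • wvec gA hA + b • wvec gB hB) (a • wvec gA hA - b • wvec gB hB) = 0 := by
  simp [nip, wvec]; ring

lemma nip_mm (a b gA hA gB hB : ℝ) :
    nip (a • wvec gA hA - b • wvec gB hB) (a • wvec gA hA - b • wvec gB hB)
      = -(4 * a * b * (gA - gB) * (hA - hB)) := by
  simp [nip, wvec]; ring

lemma diffB (g h : ℝ → ℝ) (hg : ContDiff ℝ (⊤ : ℕ∞) g) (hh : ContDiff ℝ (⊤ : ℕ∞) h)
    (hgh : ∀ t, deriv g t * deriv h t ≠ 0) (f : ℝ → ℝ)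
    (hf : ∀ t, f t = 1 / (4 * Real.sqrt |deriv g t * deriv h t|)) :
    Differentiable ℝ (fun t => f t • wvec (g t) (h t)) := by
  have hgd : Differentiable ℝ g := hg.differentiable (by simp)
  have hhd : Differentiable ℝ h := hh.differentiable (by simp)
  have hg' : Differentiable ℝ (deriv g) :=
    (contDiff_infty_iff_deriv.mp (hg.of_le (by simp))).2.differentiable (by simp)
  have hh' : Differentiable ℝ (deriv h) :=
    (contDiff_infty_iff_deriv.mp (hh.of_le (by simp))).2.differentiable (by simp)
  have hq : Differentiable ℝ (fun t => deriv g t * deriv h t) := hg'.mul hh'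
  have habs : ∀ t, DifferentiableAt ℝ (fun t => |deriv g t * deriv h t|) t := fun t =>
    (hq t).abs (hgh t)
  have hsq : ∀ t, DifferentiableAt ℝ (fun t => Real.sqrt |deriv g t * deriv h t|) t :=
    fun t => (habs t).sqrt (abs_ne_zero.mpr (hgh t))
  have hfd : Differentiable ℝ f := by
    have hfe : f = fun t => 1 / (4 * Real.sqrt |deriv g t * deriv h t|) := funext hf
    rw [hfe]
    intro t
    refine (differentiableAt_const 1).div ((differentiableAt_const 4).mul (hsq t)) ?_
    have hpos : 0 < Real.sqrt |deriv g t * deriv h t| :=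
      Real.sqrt_pos.mpr (abs_pos.mpr (hgh t))
    nlinarith
  have hW : Differentiable ℝ (fun t => wvec (g t) (h t)) := by
    rw [differentiable_pi]
    intro i
    fin_cases i <;> simp [wvec] <;> fun_prop
  exact hfd.smul hW

/-- the canonical Weierstrass representation
`Ψ(u,v) = β(u+v) + θ(u−v)` with `f₁ = 1/(4√|g₁'h₁'|)`, `f₂ = 1/(4√|g₂'h₂'|)`,
`g₁'g₂'h₁'h₂' > 0` and `(g₁−g₂)(h₁−h₂) ≠ 0` on `D` yields a minimal Lorentzian
surface in isothermal parameters (`F = 0`, `G = −E ≠ 0`, `Ψ_uu = Ψ_vv`) satisfying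
the canonical-parameter normalization
`E² = (g₁−g₂)²(h₁−h₂)²/(16 g₁'g₂'h₁'h₂')`. -/
theorem stmt11 (g₁ h₁ g₂ h₂ : ℝ → ℝ)
    (hg₁ : ContDiff ℝ (⊤ : ℕ∞) g₁) (hh₁ : ContDiff ℝ (⊤ : ℕ∞) h₁)
    (hg₂ : ContDiff ℝ (⊤ : ℕ∞) g₂) (hh₂ : ContDiff ℝ (⊤ : ℕ∞) h₂)
    (hgh₁ : ∀ t : ℝ, deriv g₁ t * deriv h₁ t ≠ 0)
    (hgh₂ : ∀ s : ℝ, deriv g₂ s * deriv h₂ s ≠ 0)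
    (f₁ f₂ : ℝ → ℝ)
    (hf₁ : ∀ t : ℝ, f₁ t = 1 / (4 * Real.sqrt |deriv g₁ t * deriv h₁ t|))
    (hf₂ : ∀ s : ℝ, f₂ s = 1 / (4 * Real.sqrt |deriv g₂ s * deriv h₂ s|))
    (D : Set (ℝ × ℝ))
    (hP : ∀ p ∈ D, 0 < deriv g₁ (p.1 + p.2) * deriv g₂ (p.1 - p.2)
      * deriv h₁ (p.1 + p.2) * deriv h₂ (p.1 - p.2))
    (hgd : ∀ p ∈ D, g₁ (p.1 + p.2) - g₂ (p.1 - p.2) ≠ 0)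
    (hhd : ∀ p ∈ D, h₁ (p.1 + p.2) - h₂ (p.1 - p.2) ≠ 0)
    (β θ : ℝ → Fin 4 → ℝ)
    (hβ : ∀ t : ℝ, HasDerivAt β (f₁ t • wvec (g₁ t) (h₁ t)) t)
    (hθ : ∀ s : ℝ, HasDerivAt θ (f₂ s • wvec (g₂ s) (h₂ s)) s)
    (Ψ : ℝ → ℝ → Fin 4 → ℝ)
    (hΨ : ∀ u v : ℝ, Ψ u v = β (u + v) + θ (u - v)) :
    ∀ p ∈ D,
      nip (d1 Ψ p.1 p.2) (d2 Ψ p.1 p.2) = 0 ∧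
      nip (d2 Ψ p.1 p.2) (d2 Ψ p.1 p.2) = -nip (d1 Ψ p.1 p.2) (d1 Ψ p.1 p.2) ∧
      nip (d1 Ψ p.1 p.2) (d1 Ψ p.1 p.2) ≠ 0 ∧
      d1 (d1 Ψ) p.1 p.2 = d2 (d2 Ψ) p.1 p.2 ∧
      (nip (d1 Ψ p.1 p.2) (d1 Ψ p.1 p.2)) ^ 2
        = (g₁ (p.1 + p.2) - g₂ (p.1 - p.2)) ^ 2
            * (h₁ (p.1 + p.2) - h₂ (p.1 - p.2)) ^ 2
          / (16 * (deriv g₁ (p.1 + p.2) * deriv g₂ (p.1 - p.2)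
              * deriv h₁ (p.1 + p.2) * deriv h₂ (p.1 - p.2))) := by
  set B : ℝ → Fin 4 → ℝ := fun t => f₁ t • wvec (g₁ t) (h₁ t) with hBdef
  set T : ℝ → Fin 4 → ℝ := fun s => f₂ s • wvec (g₂ s) (h₂ s) with hTdef
  have hBd : Differentiable ℝ B := diffB g₁ h₁ hg₁ hh₁ hgh₁ f₁ hf₁
  have hTd : Differentiable ℝ T := diffB g₂ h₂ hg₂ hh₂ hgh₂ f₂ hf₂
  have hd1 : ∀ u v : ℝ, d1 Ψ u v = B (u + v) + T (u - v) := by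
    intro u v
    have heq : (fun t => Ψ t v) = fun t => β (t + v) + θ (t - v) := funext fun t => hΨ t v
    have h1 : HasDerivAt (fun t => β (t + v)) (B (u + v)) u := by
      exact (hβ (u + v)).comp_add_const u v
    have h2 : HasDerivAt (fun t => θ (t - v)) (T (u - v)) u := by
      exact (hθ (u - v)).comp_sub_const u v
    rw [d1, heq]
    exact (h1.add h2).deriv
  have hd2 : ∀ u v : ℝ, d2 Ψ u v = B (u + v) - T (u - v) := by
    intro u v
    have heq : (fun s => Ψ u s) = fun s => β (u + s) + θ (u - s) := funext fun s => hΨ u s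
    have h1 : HasDerivAt (fun s => β (u + s)) (B (u + v)) v := by
      exact (hβ (u + v)).comp_const_add u v
    have h2 : HasDerivAt (fun s => θ (u - s)) (-(T (u - v))) v := by
      exact (hθ (u - v)).comp_const_sub u v
    rw [d2, heq]
    have := (h1.add h2).deriv
    exact this.trans (by abel)
  rintro ⟨u, v⟩ hp
  have hPp := hP ⟨u, v⟩ hp
  have hgdp := hgd ⟨u, v⟩ hp
  have hhdp := hhd ⟨u, v⟩ hp
  simp only at hPp hgdp hhdp ⊢
  set A1 := deriv g₁ (u + v) with hA1
  set A2 := deriv g₂ (u - v) with hA2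
  set C1 := deriv h₁ (u + v) with hC1
  set C2 := deriv h₂ (u - v) with hC2
  set a := f₁ (u + v) with ha
  set b := f₂ (u - v) with hb
  set gA := g₁ (u + v)
  set gB := g₂ (u - v)
  set hA := h₁ (u + v)
  set hB := h₂ (u - v)
  have hBv : B (u + v) = a • wvec gA hA := rfl
  have hTv : T (u - v) = b • wvec gB hB := rfl
  have e1 : d1 Ψ u v = a • wvec gA hA + b • wvec gB hB := by rw [hd1, hBv, hTv]
  have e2 : d2 Ψ u v = a • wvec gA hA - b • wvec gB hB := by rw [hd2, hBv, hTv]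
  -- positivity facts
  have hs1pos : 0 < Real.sqrt |A1 * C1| := Real.sqrt_pos.mpr (abs_pos.mpr (hgh₁ (u + v)))
  have hs2pos : 0 < Real.sqrt |A2 * C2| := Real.sqrt_pos.mpr (abs_pos.mpr (hgh₂ (u - v)))
  have hapos : 0 < a := by rw [ha, hf₁]; positivity
  have hbpos : 0 < b := by rw [hb, hf₂]; positivity
  have hEval : nip (d1 Ψ u v) (d1 Ψ u v) = 4 * a * b * (gA - gB) * (hA - hB) := by
    rw [e1]; exact nip_pp _ _ _ _ _ _
  refine ⟨?_, ?_, ?_, ?_, ?_⟩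
  · rw [e1, e2]; exact nip_pm _ _ _ _ _ _
  · rw [e2, hEval]; exact nip_mm _ _ _ _ _ _
  · rw [hEval]
    have : (4:ℝ) ≠ 0 := by norm_num
    exact mul_ne_zero (mul_ne_zero (mul_ne_zero (mul_ne_zero this hapos.ne')
      hbpos.ne') hgdp) hhdp
  · have hdd1 : d1 (d1 Ψ) u v = deriv B (u + v) + deriv T (u - v) := by
      have heq : (fun t => d1 Ψ t v) = fun t => B (t + v) + T (t - v) :=
        funext fun t => hd1 t v
      have h1 : HasDerivAt (fun t => B (t + v)) (deriv B (u + v)) u := by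
        exact ((hBd (u + v)).hasDerivAt).comp_add_const u v
      have h2 : HasDerivAt (fun t => T (t - v)) (deriv T (u - v)) u := by
        exact ((hTd (u - v)).hasDerivAt).comp_sub_const u v
      rw [d1, heq]
      exact (h1.add h2).deriv
    have hdd2 : d2 (d2 Ψ) u v = deriv B (u + v) + deriv T (u - v) := by
      have heq : (fun s => d2 Ψ u s) = fun s => B (u + s) - T (u - s) :=
        funext fun s => hd2 u s
      have h1 : HasDerivAt (fun s => B (u + s)) (deriv B (u + v)) v := by
        exact ((hBd (u + v)).hasDerivAt).comp_const_add u v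
      have h2 : HasDerivAt (fun s => T (u - s)) (-(deriv T (u - v))) v := by
        exact ((hTd (u - v)).hasDerivAt).comp_const_sub u v
      rw [d2, heq]
      have h3 := (h1.sub h2).deriv
      exact h3.trans (by abel)
    rw [hdd1, hdd2]
  · have hs1 : Real.sqrt |A1 * C1| ^ 2 = |A1 * C1| := Real.sq_sqrt (abs_nonneg _)
    have hs2 : Real.sqrt |A2 * C2| ^ 2 = |A2 * C2| := Real.sq_sqrt (abs_nonneg _)
    have habs : |A1 * C1| * |A2 * C2| = A1 * A2 * C1 * C2 := by
      rw [← abs_mul]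
      have heq : A1 * C1 * (A2 * C2) = A1 * A2 * C1 * C2 := by ring
      rw [heq, abs_of_pos hPp]
    have ha2 : a ^ 2 = 1 / (16 * |A1 * C1|) := by
      rw [ha, hf₁]
      rw [div_pow, mul_pow, hs1]
      norm_num
    have hb2 : b ^ 2 = 1 / (16 * |A2 * C2|) := by
      rw [hb, hf₂]
      rw [div_pow, mul_pow, hs2]
      norm_num
    have hX : |A1 * C1| ≠ 0 := abs_ne_zero.mpr (hgh₁ (u + v))
    have hY : |A2 * C2| ≠ 0 := abs_ne_zero.mpr (hgh₂ (u - v))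
    calc nip (d1 Ψ u v) (d1 Ψ u v) ^ 2
        = 16 * a ^ 2 * b ^ 2 * ((gA - gB) ^ 2 * (hA - hB) ^ 2) := by rw [hEval]; ring
      _ = 16 * (1 / (16 * |A1 * C1|)) * (1 / (16 * |A2 * C2|))
            * ((gA - gB) ^ 2 * (hA - hB) ^ 2) := by rw [ha2, hb2]
      _ = (gA - gB) ^ 2 * (hA - hB) ^ 2 / (16 * (|A1 * C1| * |A2 * C2|)) := by
            field_simp
      _ = (gA - gB) ^ 2 * (hA - hB) ^ 2 / (16 * (A1 * A2 * C1 * C2)) := by rw [habs]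
end
end

section
/- Let f, g, h be smooth real functions on an interval J with f(t) ≠ 0 and g'(t)h'(t) ≠ 0 for all t ∈ J, and let β be a null curve with β'(t) = f(t)·(1 + g(t)h(t), g(t) − h(t), 1 − g(t)h(t), g(t) + h(t)). Then for any t₀ ∈ J there exist an open interval I ∋ z₀ (for any chosen z₀) and a smooth function p : I → J with p(z₀) = t₀, p' > 0, satisfying the ODE (p'(z))² = 1/(4 |f(p(z))| √|g'(p(z)) h'(p(z))|); and for any such p the reparametrized curve β̃ = β ∘ p satisfies β̃'(z) = f̃(z)·(1 + g̃(z)h̃(z), g̃(z) − h̃(z), 1 − g̃(z)h̃(z), g̃(z) + h̃(z)) with g̃ = g ∘ p, h̃ = h ∘ p, f̃ = (f ∘ p)·p', and f̃ = ± 1/(4√|g̃'h̃'|), i.e. the reparametrized curve is in the canonical Weierstrass form. -/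
noncomputable section

open Filter Topology
set_option maxHeartbeats 1000000

/-- a Weierstrass-type null curve
`β'(t) = f(t)·(1 + gh, g − h, 1 − gh, g + h)` with `f ≠ 0` and `g'h' ≠ 0` on an
open interval `J` can be reparametrized into canonical form: for any `t₀ ∈ J` and
any `z₀` there are an open interval `I ∋ z₀` and a smooth `p : I → J` with
`p(z₀) = t₀`, `p' > 0` and `(p')² = 1/(4|f∘p|√|(g'∘p)(h'∘p)|)`; and for any such
`p` the curve `β ∘ p` has Weierstrass data `g̃ = g∘p`, `h̃ = h∘p`,
`f̃ = (f∘p)·p'` with `f̃ = ±1/(4√|g̃'h̃'|)`. -/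
theorem stmt13 (f g h : ℝ → ℝ) (J : Set ℝ)
    (hJopen : IsOpen J) (hJconn : J.OrdConnected)
    (hf : ContDiffOn ℝ (⊤ : ℕ∞) f J) (hg : ContDiffOn ℝ (⊤ : ℕ∞) g J) (hh : ContDiffOn ℝ (⊤ : ℕ∞) h J)
    (hfne : ∀ t ∈ J, f t ≠ 0)
    (hgh : ∀ t ∈ J, deriv g t * deriv h t ≠ 0)
    (β : ℝ → Fin 4 → ℝ)
    (hβ : ∀ t ∈ J, HasDerivAt β (f t • wvec (g t) (h t)) t) :
    ∀ t₀ ∈ J, ∀ z₀ : ℝ,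
      (∃ I : Set ℝ, IsOpen I ∧ I.OrdConnected ∧ z₀ ∈ I ∧
        ∃ p : ℝ → ℝ, ContDiffOn ℝ (⊤ : ℕ∞) p I ∧ p z₀ = t₀ ∧ Set.MapsTo p I J ∧
          ∀ z ∈ I, 0 < deriv p z ∧
            (deriv p z) ^ 2 = 1 / (4 * |f (p z)|
              * Real.sqrt |deriv g (p z) * deriv h (p z)|)) ∧
      (∀ (I : Set ℝ) (p : ℝ → ℝ), IsOpen I → I.OrdConnected → z₀ ∈ I →
        ContDiffOn ℝ (⊤ : ℕ∞) p I → p z₀ = t₀ → Set.MapsTo p I J →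
        (∀ z ∈ I, 0 < deriv p z ∧
          (deriv p z) ^ 2 = 1 / (4 * |f (p z)|
            * Real.sqrt |deriv g (p z) * deriv h (p z)|)) →
        ∀ z ∈ I,
          HasDerivAt (β ∘ p)
            ((f (p z) * deriv p z) • wvec (g (p z)) (h (p z))) z ∧
          (f (p z) * deriv p z
              = 1 / (4 * Real.sqrt |deriv (g ∘ p) z * deriv (h ∘ p) z|) ∨
            f (p z) * deriv p z
              = -(1 / (4 * Real.sqrt |deriv (g ∘ p) z * deriv (h ∘ p) z|)))) := by
  -- analyticity of the derivative data
  have hg'C : ContDiffOn ℝ (⊤ : ℕ∞) (deriv g) J := hg.deriv_of_isOpen hJopen (le_of_eq rfl)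
  have hh'C : ContDiffOn ℝ (⊤ : ℕ∞) (deriv h) J := hh.deriv_of_isOpen hJopen (le_of_eq rfl)
  set S : ℝ → ℝ := fun t => 4 * |f t| * Real.sqrt |deriv g t * deriv h t| with hS
  set φ : ℝ → ℝ := fun t => Real.sqrt (S t) with hφ
  have hSpos : ∀ t ∈ J, 0 < S t := by
    intro t ht
    have h1 : 0 < |f t| := abs_pos.2 (hfne t ht)
    have h2 : 0 < Real.sqrt |deriv g t * deriv h t| :=
      Real.sqrt_pos.2 (abs_pos.2 (hgh t ht))
    positivity
  have hφC : ContDiffOn ℝ (⊤ : ℕ∞) φ J := by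
    intro t ht
    have hf1 : ContDiffAt ℝ (⊤ : ℕ∞) f t := hf.contDiffAt (hJopen.mem_nhds ht)
    have h1 : ContDiffAt ℝ (⊤ : ℕ∞) (fun s => |f s|) t :=
      (contDiffAt_abs (hfne t ht)).comp t hf1
    have h2 : ContDiffAt ℝ (⊤ : ℕ∞) (fun s => deriv g s * deriv h s) t :=
      (hg'C.contDiffAt (hJopen.mem_nhds ht)).mul (hh'C.contDiffAt (hJopen.mem_nhds ht))
    have h3 : ContDiffAt ℝ (⊤ : ℕ∞) (fun s => |deriv g s * deriv h s|) t :=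
      ((contDiffAt_abs (hgh t ht)).comp t h2 :
        ContDiffAt ℝ (⊤ : ℕ∞) ((|·|) ∘ fun s => deriv g s * deriv h s) t)
    have h4 : ContDiffAt ℝ (⊤ : ℕ∞) (fun s => Real.sqrt |deriv g s * deriv h s|) t :=
      (Real.contDiffAt_sqrt (abs_ne_zero.2 (hgh t ht))).comp t h3
    have h5 : ContDiffAt ℝ (⊤ : ℕ∞) S t := (contDiffAt_const.mul h1).mul h4
    have h6 : ContDiffAt ℝ (⊤ : ℕ∞) φ t :=
      (Real.contDiffAt_sqrt (ne_of_gt (hSpos t ht))).comp t h5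
    exact h6.contDiffWithinAt
  have hφpos : ∀ t ∈ J, 0 < φ t := fun t ht => Real.sqrt_pos.2 (hSpos t ht)
  have hφsq : ∀ t ∈ J, φ t ^ 2 = S t := fun t ht => Real.sq_sqrt (hSpos t ht).le
  intro t₀ ht₀ z₀
  constructor
  · -- existence
    set Q : ℝ → ℝ := fun t => z₀ + ∫ s in t₀..t, φ s with hQ
    have hQt₀ : Q t₀ = z₀ := by simp [hQ]
    have hφcont : ContinuousOn φ J := hφC.continuousOn
    have hQder : ∀ t ∈ J, HasDerivAt Q (φ t) t := by
      intro t ht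
      apply HasDerivAt.const_add
      apply intervalIntegral.integral_hasDerivAt_right
      · exact (hφcont.mono (hJconn.uIcc_subset ht₀ ht)).intervalIntegrable
      · exact hφcont.stronglyMeasurableAtFilter hJopen t ht
      · exact hφcont.continuousAt (hJopen.mem_nhds ht)
    have hQC : ContDiffOn ℝ (⊤ : ℕ∞) Q J := by
      rw [contDiffOn_infty_iff_deriv_of_isOpen hJopen]
      refine ⟨fun t ht => (hQder t ht).differentiableAt.differentiableWithinAt, ?_⟩
      exact hφC.congr (fun t ht => (hQder t ht).deriv)
    have hQcd : ContDiffAt ℝ (⊤ : ℕ∞) Q t₀ := hQC.contDiffAt (hJopen.mem_nhds ht₀)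
    have hφt₀ : φ t₀ ≠ 0 := (hφpos t₀ ht₀).ne'
    set e : ℝ ≃L[ℝ] ℝ := ContinuousLinearEquiv.unitsEquivAut ℝ (Units.mk0 (φ t₀) hφt₀) with he
    have hfd : HasFDerivAt Q (e : ℝ →L[ℝ] ℝ) t₀ := by
      have h1 := (hQder t₀ ht₀).hasFDerivAt
      have h2 : (e : ℝ →L[ℝ] ℝ)
          = ContinuousLinearMap.smulRight (1 : ℝ →L[ℝ] ℝ) (φ t₀) := by
        ext
        simp [he, ContinuousLinearEquiv.unitsEquivAut]
      rw [h2]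
      exact h1
    have hn : ((⊤ : ℕ∞) : WithTop ℕ∞) ≠ 0 := by simp
    set p : ℝ → ℝ := hQcd.localInverse hfd hn with hp
    have hstrict := hQcd.hasStrictFDerivAt' hfd hn
    have hpz₀ : p z₀ = t₀ := by
      have := hQcd.localInverse_apply_image hfd hn
      rwa [hQt₀] at this
    set T := hstrict.toOpenPartialHomeomorph Q with hT
    have hpT : p = T.symm := rfl
    have hTcoe : (T : ℝ → ℝ) = Q := hstrict.toOpenPartialHomeomorph_coe
    have hz₀T : z₀ ∈ T.target := by
      have := hstrict.image_mem_toOpenPartialHomeomorph_target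
      rwa [hQt₀] at this
    have hUopen : IsOpen (T.target ∩ p ⁻¹' J) :=
      T.continuousOn_symm.isOpen_inter_preimage T.open_target hJopen
    have hz₀U : z₀ ∈ T.target ∩ p ⁻¹' J := ⟨hz₀T, show p z₀ ∈ J from hpz₀ ▸ ht₀⟩
    have hpder : ∀ y ∈ T.target ∩ p ⁻¹' J, HasDerivAt p (φ (p y))⁻¹ y := by
      intro y hy
      have h1 : HasDerivAt T (φ (p y)) (T.symm y) := by
        rw [hTcoe]; exact hQder _ hy.2
      exact T.hasDerivAt_symm hy.1 (hφpos _ hy.2).ne' h1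
    obtain ⟨δ, hδ, hballU⟩ := Metric.isOpen_iff.1 hUopen z₀ hz₀U
    have hpn : ∀ n : ℕ, ContDiffOn ℝ n p (T.target ∩ p ⁻¹' J) := by
      intro n
      induction n with
      | zero =>
        exact contDiffOn_zero.2 (fun y hy => (hpder y hy).continuousAt.continuousWithinAt)
      | succ n ih =>
        rw [Nat.cast_succ, contDiffOn_succ_iff_deriv_of_isOpen hUopen]
        refine ⟨fun y hy => (hpder y hy).differentiableAt.differentiableWithinAt, by simp, ?_⟩
        have hc : ContDiffOn ℝ n (fun y => (φ (p y))⁻¹) (T.target ∩ p ⁻¹' J) :=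
          ((contDiffOn_infty.1 hφC n).comp ih (fun y hy => hy.2)).inv
            (fun y hy => (hφpos _ hy.2).ne')
        exact hc.congr (fun y hy => (hpder y hy).deriv)
    have hpC : ContDiffOn ℝ (⊤ : ℕ∞) p (T.target ∩ p ⁻¹' J) := contDiffOn_infty.2 hpn
    refine ⟨Metric.ball z₀ δ, Metric.isOpen_ball, (convex_ball z₀ δ).ordConnected,
      Metric.mem_ball_self hδ, p, hpC.mono hballU, hpz₀, fun z hz => (hballU hz).2, ?_⟩
    intro z hz
    have hpz : p z ∈ J := (hballU hz).2
    have hdp : deriv p z = 1 / φ (p z) := by rw [(hpder z (hballU hz)).deriv, one_div]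
    have hφpz : 0 < φ (p z) := hφpos _ hpz
    constructor
    · rw [hdp]; positivity
    · rw [hdp, div_pow, one_pow, hφsq _ hpz]
  · -- canonical form
    intro I p hIopen hIconn hz₀I hpcd hpz₀ hmaps hode z hzI
    have hpz : p z ∈ J := hmaps hzI
    have hpdz : DifferentiableAt ℝ p z :=
      (hpcd.contDiffAt (hIopen.mem_nhds hzI)).differentiableAt (by simp)
    have hgdz : DifferentiableAt ℝ g (p z) :=
      (hg.contDiffAt (hJopen.mem_nhds hpz)).differentiableAt (by simp)
    have hhdz : DifferentiableAt ℝ h (p z) :=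
      (hh.contDiffAt (hJopen.mem_nhds hpz)).differentiableAt (by simp)
    obtain ⟨hDpos, hDsq⟩ := hode z hzI
    set D : ℝ := deriv p z with hD
    constructor
    · have := (hβ _ hpz).scomp z hpdz.hasDerivAt
      have hsm : D • (f (p z) • wvec (g (p z)) (h (p z)))
          = (f (p z) * D) • wvec (g (p z)) (h (p z)) := by
        rw [smul_smul, mul_comm]
      rwa [hsm] at this
    · have hcg : deriv (g ∘ p) z = deriv g (p z) * D := deriv_comp z hgdz hpdz
      have hch : deriv (h ∘ p) z = deriv h (p z) * D := deriv_comp z hhdz hpdz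
      set A : ℝ := deriv g (p z) * deriv h (p z) with hA
      have hAne : A ≠ 0 := hgh _ hpz
      have habs : |deriv (g ∘ p) z * deriv (h ∘ p) z| = |A| * D ^ 2 := by
        rw [hcg, hch]
        rw [show deriv g (p z) * D * (deriv h (p z) * D) = A * D ^ 2 by ring]
        rw [abs_mul, abs_pow, sq_abs]
      have hsqrt : Real.sqrt |deriv (g ∘ p) z * deriv (h ∘ p) z|
          = Real.sqrt |A| * D := by
        rw [habs, Real.sqrt_mul (abs_nonneg _), Real.sqrt_sq hDpos.le]
      have hSA : 0 < Real.sqrt |A| := Real.sqrt_pos.2 (abs_pos.2 hAne)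
      have hfpz := hfne _ hpz
      rw [hsqrt]
      have h4 : (4 : ℝ) * (Real.sqrt |A| * D) ≠ 0 := by positivity
      have hexp : f (p z) * D * (4 * (Real.sqrt |A| * D))
          = 4 * f (p z) * Real.sqrt |A| * D ^ 2 := by ring
      rcases lt_or_gt_of_ne hfpz with hneg | hpos
      · right
        have habsf : |f (p z)| = -(f (p z)) := abs_of_neg hneg
        rw [habsf] at hDsq
        rw [show -(1 / (4 * (Real.sqrt |A| * D)))
            = (-1) / (4 * (Real.sqrt |A| * D)) by ring]
        rw [eq_div_iff h4, hexp, hDsq]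
        field_simp
      · left
        have habsf : |f (p z)| = f (p z) := abs_of_pos hpos
        rw [habsf] at hDsq
        rw [eq_div_iff h4, hexp, hDsq]
        field_simp
end
end
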